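/- In the Černý automaton C_n (n ≥ 2), no word of length less than (n−1)² is synchronizing; together with the existence of a synchronizing word of length (n−1)², the minimal synchronizing word has length exactly (n−1)². -/
import Mathlib


/-- Extension of the transition function of a DFA to words. -/
def actW {Q A : Type*} (δ : Q → A → Q) (q : Q) (w : List A) : Q := w.foldl δ q

/-- Alphabet of the Černý automaton. -/
inductive CLetter | a | b
deriving DecidableEq

/-- Transition function of the Černý automaton C_n on states `ZMod n`:
`a` is the cyclic shift, `b` moves 0 to 1 and fixes all other states. -/
def cernyδ (n : ℕ) : ZMod n → CLetter → ZMod n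
  | i, CLetter.a => i + 1
  | i, CLetter.b => if i = 0 then 1 else i

set_option linter.unusedVariables false

def Arc (n : ℕ) (p : ZMod n) (ℓ : ℕ) : Set (ZMod n) :=
  {x | ∃ k : ℕ, k < ℓ ∧ x = p + (k : ZMod n)}

def Tset (n : ℕ) (s : ZMod n) (v : List CLetter) : Set (ZMod n) :=
  {q | actW (cernyδ n) q v = s}

/-- Lower bound on the length of a word whose preimage-of-target set is `Arc p ℓ`. -/
def Bnd (n : ℕ) (p : ZMod n) (ℓ : ℕ) : ℕ :=
  if 2 ≤ ℓ then (ℓ - 1) + (ℓ - 2) * (n - 1) + (-p).val else 0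

section
variable {n : ℕ}

lemma Tset_nil (s : ZMod n) : Tset n s [] = {s} := rfl

lemma mem_Tset_a (s q : ZMod n) (v : List CLetter) :
    q ∈ Tset n s (CLetter.a :: v) ↔ q + 1 ∈ Tset n s v := Iff.rfl

lemma mem_Tset_b (s q : ZMod n) (v : List CLetter) :
    q ∈ Tset n s (CLetter.b :: v) ↔ (if q = 0 then (1 : ZMod n) else q) ∈ Tset n s v := Iff.rfl

lemma zmod_cast_inj (hn : 0 < n) {k k' : ℕ} (hk : k < n) (hk' : k' < n)
    (h : (k : ZMod n) = (k' : ZMod n)) : k = k' := by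
  haveI : NeZero n := ⟨by omega⟩
  have := congrArg ZMod.val h
  rwa [ZMod.val_cast_of_lt hk, ZMod.val_cast_of_lt hk'] at this

lemma arc_univ (hn : 0 < n) (p : ZMod n) : Arc n p n = Set.univ := by
  haveI : NeZero n := ⟨by omega⟩
  ext x
  simp only [Arc, Set.mem_setOf_eq, Set.mem_univ, iff_true]
  refine ⟨(x - p).val, ZMod.val_lt _, ?_⟩
  rw [ZMod.natCast_val, ZMod.cast_id]
  ring

lemma arc_shift (p : ZMod n) (ℓ : ℕ) (q : ZMod n) :
    {x : ZMod n | x + q ∈ Arc n p ℓ} = Arc n (p - q) ℓ := by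
  ext x
  simp only [Arc, Set.mem_setOf_eq]
  constructor
  · rintro ⟨k, hk, hx⟩
    exact ⟨k, hk, by linear_combination hx⟩
  · rintro ⟨k, hk, hx⟩
    exact ⟨k, hk, by linear_combination hx⟩

lemma arc_start_one (hn : 0 < n) {p : ZMod n} {ℓ : ℕ}
    (h1 : (1 : ZMod n) ∈ Arc n p ℓ) (h0 : (0 : ZMod n) ∉ Arc n p ℓ) : p = 1 := by
  obtain ⟨k, hk, hx⟩ := h1
  rcases Nat.eq_zero_or_pos k with rfl | hkpos
  · simpa using hx.symm
  · exfalso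
    exact h0 ⟨k - 1, by omega, by
      push_cast [Nat.cast_sub hkpos]
      linear_combination hx⟩

lemma arc_lt_n_of_notMem (hn : 0 < n) {p : ZMod n} {ℓ : ℕ} (hl : ℓ ≤ n)
    {x : ZMod n} (h : x ∉ Arc n p ℓ) : ℓ < n := by
  rcases lt_or_eq_of_le hl with h' | rfl
  · exact h'
  · exact absurd (by rw [arc_univ hn]; trivial) h

lemma arc_grow (hn : 0 < n) {ℓ : ℕ} (hl : ℓ < n) :
    insert (0 : ZMod n) (Arc n 1 ℓ) = Arc n 0 (ℓ + 1) := by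
  ext x
  simp only [Set.mem_insert_iff, Arc, Set.mem_setOf_eq]
  constructor
  · rintro (rfl | ⟨k, hk, hx⟩)
    · exact ⟨0, by omega, by simp⟩
    · exact ⟨k + 1, by omega, by push_cast; linear_combination hx⟩
  · rintro ⟨k, hk, hx⟩
    rcases Nat.eq_zero_or_pos k with rfl | hkpos
    · left; simpa using hx
    · right
      exact ⟨k - 1, by omega, by push_cast [Nat.cast_sub hkpos]; linear_combination hx⟩

lemma arc_end_zero (hn : 0 < n) {p : ZMod n} {ℓ : ℕ} (hl : ℓ ≤ n)
    (h0 : (0 : ZMod n) ∈ Arc n p ℓ) (h1 : (1 : ZMod n) ∉ Arc n p ℓ) :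
    (0 : ZMod n) = p + ((ℓ - 1 : ℕ) : ZMod n) := by
  obtain ⟨k, hk, hx⟩ := h0
  have : k = ℓ - 1 := by
    by_contra hne
    exact h1 ⟨k + 1, by omega, by push_cast; linear_combination hx⟩
  rw [← this]; exact hx

lemma arc_shrink (hn : 0 < n) {p : ZMod n} {ℓ : ℕ} (hl : ℓ ≤ n) (hl2 : 2 ≤ ℓ)
    (h0 : (0 : ZMod n) ∈ Arc n p ℓ) (h1 : (1 : ZMod n) ∉ Arc n p ℓ) :
    Arc n p ℓ \ {0} = Arc n p (ℓ - 1) := by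
  have hend := arc_end_zero hn hl h0 h1
  ext x
  simp only [Arc, Set.mem_diff, Set.mem_setOf_eq, Set.mem_singleton_iff]
  constructor
  · rintro ⟨⟨k, hk, hx⟩, hx0⟩
    refine ⟨k, ?_, hx⟩
    rcases Nat.lt_or_ge k (ℓ - 1) with h | h
    · exact h
    · exfalso
      have : k = ℓ - 1 := by omega
      subst this
      exact hx0 (by rw [hx, ← hend])
  · rintro ⟨k, hk, hx⟩
    refine ⟨⟨k, by omega, hx⟩, ?_⟩
    intro hx0
    have : (k : ZMod n) = ((ℓ - 1 : ℕ) : ZMod n) := by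
      have := hend
      rw [← hx0, hx] at this
      linear_combination this
    have := zmod_cast_inj hn (by omega) (by omega) this
    omega

lemma arc_ne_univ (hn : 0 < n) {p : ZMod n} {ℓ : ℕ} (hl : ℓ < n) :
    Arc n p ℓ ≠ Set.univ := by
  intro h
  have : p + (ℓ : ZMod n) ∈ Arc n p ℓ := by rw [h]; trivial
  obtain ⟨k, hk, hx⟩ := this
  have : (ℓ : ZMod n) = (k : ZMod n) := by linear_combination hx
  have := zmod_cast_inj hn hl (by omega) this
  omega

/-- Preimage step for letter `a` on an arc. -/
lemma Tset_a_arc (s : ZMod n) (v : List CLetter) {p : ZMod n} {ℓ : ℕ}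
    (h : Tset n s v = Arc n p ℓ) :
    Tset n s (CLetter.a :: v) = Arc n (p - 1) ℓ := by
  rw [← arc_shift p ℓ 1]
  ext x
  rw [Set.mem_setOf_eq, ← h]
  exact mem_Tset_a s x v

/-- Preimage step for `b` when `0` and `1` behave the same. -/
lemma Tset_b_same (s : ZMod n) (v : List CLetter)
    (h : (0 : ZMod n) ∈ Tset n s v ↔ (1 : ZMod n) ∈ Tset n s v) :
    Tset n s (CLetter.b :: v) = Tset n s v := by
  ext x
  rw [mem_Tset_b]
  by_cases hx : x = 0
  · subst hx; simp [h]
  · simp [hx]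

/-- Preimage step for `b`: growth case. -/
lemma Tset_b_grow (s : ZMod n) (v : List CLetter)
    (h1 : (1 : ZMod n) ∈ Tset n s v) (h0 : (0 : ZMod n) ∉ Tset n s v) :
    Tset n s (CLetter.b :: v) = insert 0 (Tset n s v) := by
  ext x
  rw [mem_Tset_b]
  by_cases hx : x = 0
  · subst hx; simp [h1]
  · simp [hx]

/-- Preimage step for `b`: shrink case. -/
lemma Tset_b_shrink (s : ZMod n) (v : List CLetter)
    (h1 : (1 : ZMod n) ∉ Tset n s v) (h0 : (0 : ZMod n) ∈ Tset n s v) :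
    Tset n s (CLetter.b :: v) = Tset n s v \ {0} := by
  ext x
  rw [mem_Tset_b]
  by_cases hx : x = 0
  · subst hx; simp [h1]
  · simp [hx]

lemma val_neg_one (hn : 2 ≤ n) : (-1 : ZMod n).val = n - 1 := by
  haveI : NeZero n := ⟨by omega⟩
  have h : (-1 : ZMod n) = ((n - 1 : ℕ) : ZMod n) := by
    push_cast [Nat.cast_sub (by omega : 1 ≤ n)]
    simp [ZMod.natCast_self]
  rw [h, ZMod.val_cast_of_lt (by omega)]

lemma Bnd_a_step (hn : 2 ≤ n) (p : ZMod n) (ℓ : ℕ) :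
    Bnd n (p - 1) ℓ ≤ Bnd n p ℓ + 1 := by
  haveI : NeZero n := ⟨by omega⟩
  haveI : Fact (1 < n) := ⟨by omega⟩
  unfold Bnd
  by_cases h : 2 ≤ ℓ
  · simp only [h, if_true]
    have : (-(p - 1)).val ≤ (-p).val + 1 := by
      have e : -(p - 1) = -p + 1 := by ring
      rw [e, ZMod.val_add, ZMod.val_one]
      exact le_trans (Nat.mod_le _ _) (le_refl _)
    omega
  · simp only [h, if_false]
    omega

lemma Bnd_mono (p : ZMod n) {ℓ ℓ' : ℕ} (h : ℓ' ≤ ℓ) : Bnd n p ℓ' ≤ Bnd n p ℓ := by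
  unfold Bnd
  by_cases h2 : 2 ≤ ℓ'
  · simp only [h2, if_true, (by omega : 2 ≤ ℓ), if_true]
    have := Nat.mul_le_mul_right (n - 1) (by omega : ℓ' - 2 ≤ ℓ - 2)
    omega
  · simp only [h2, if_false]
    omega

lemma Bnd_grow_step (hn : 2 ≤ n) {ℓ : ℕ} (hl : 1 ≤ ℓ) :
    Bnd n 0 (ℓ + 1) ≤ Bnd n 1 ℓ + 1 := by
  haveI : NeZero n := ⟨by omega⟩
  have hneg0 : (-(0 : ZMod n)).val = 0 := by simp
  have hneg1 : (-(1 : ZMod n)).val = n - 1 := val_neg_one hn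
  unfold Bnd
  rcases Nat.lt_or_ge ℓ 2 with h | h
  · have hℓ : ℓ = 1 := by omega
    subst hℓ
    simp only [hneg0, hneg1]
    norm_num
  · obtain ⟨m, rfl⟩ : ∃ m, ℓ = m + 2 := ⟨ℓ - 2, by omega⟩
    simp only [hneg0, hneg1, (by omega : 2 ≤ m + 2), (by omega : 2 ≤ m + 2 + 1), if_true]
    have : (m + 2 + 1 - 2) * (n - 1) = (m + 2 - 2) * (n - 1) + (n - 1) := by
      have : m + 2 + 1 - 2 = (m + 2 - 2) + 1 := by omega
      rw [this, Nat.succ_mul]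
    omega

/-- The main invariant: the preimage set of any word is empty or an arc,
with length bounded below by `Bnd`. -/
lemma invariant (hn : 2 ≤ n) (s : ZMod n) (v : List CLetter) :
    Tset n s v = ∅ ∨ ∃ p ℓ, 1 ≤ ℓ ∧ ℓ ≤ n ∧ Tset n s v = Arc n p ℓ ∧
      Bnd n p ℓ ≤ v.length := by
  have hn0 : 0 < n := by omega
  induction v with
  | nil =>
    right
    refine ⟨s, 1, le_refl _, by omega, ?_, by simp [Bnd]⟩
    rw [Tset_nil]
    ext x
    simp only [Set.mem_singleton_iff, Arc, Set.mem_setOf_eq]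
    constructor
    · rintro rfl; exact ⟨0, by omega, by simp⟩
    · rintro ⟨k, hk, hx⟩
      interval_cases k
      simpa using hx
  | cons c v ih =>
    rcases ih with hE | ⟨p, ℓ, hl1, hln, hT, hB⟩
    · left
      ext x
      cases c
      · rw [Set.mem_empty_iff_false, iff_false, mem_Tset_a, hE]
        exact Set.notMem_empty _
      · rw [Set.mem_empty_iff_false, iff_false, mem_Tset_b, hE]
        exact Set.notMem_empty _
    · cases c with
      | a =>
        right
        exact ⟨p - 1, ℓ, hl1, hln, Tset_a_arc s v hT,
          le_trans (Bnd_a_step hn p ℓ) (by simpa using Nat.add_le_add_right hB 1)⟩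
      | b =>
        by_cases h0 : (0 : ZMod n) ∈ Tset n s v
        · by_cases h1 : (1 : ZMod n) ∈ Tset n s v
          · right
            refine ⟨p, ℓ, hl1, hln, ?_, by simp only [List.length_cons]; omega⟩
            rw [Tset_b_same s v (by tauto), hT]
          · -- shrink
            have hTb := Tset_b_shrink s v h1 h0
            rcases Nat.lt_or_ge ℓ 2 with h2 | h2
            · -- ℓ = 1, set becomes empty
              left
              have hℓ : ℓ = 1 := by omega
              subst hℓ
              rw [hTb, hT]
              have h0' : (0 : ZMod n) ∈ Arc n p 1 := hT ▸ h0
              obtain ⟨k, hk, hx⟩ := h0'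
              interval_cases k
              simp only [Nat.cast_zero, add_zero] at hx
              ext x
              simp only [Set.mem_diff, Set.mem_singleton_iff, Set.mem_empty_iff_false,
                iff_false, not_and, not_not, Arc, Set.mem_setOf_eq]
              rintro ⟨k, hk, hy⟩
              interval_cases k
              simp only [Nat.cast_zero, add_zero] at hy
              rw [hy, ← hx]
            · right
              refine ⟨p, ℓ - 1, by omega, by omega, ?_, ?_⟩
              · rw [hTb, hT, arc_shrink hn0 hln h2 (hT ▸ h0) (hT ▸ h1)]
              · simp only [List.length_cons]; exact le_trans (Bnd_mono p (by omega : ℓ - 1 ≤ ℓ)) (by omega)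
        · by_cases h1 : (1 : ZMod n) ∈ Tset n s v
          · -- grow
            right
            have hp : p = 1 := arc_start_one hn0 (hT ▸ h1) (hT ▸ h0)
            have hlt : ℓ < n := arc_lt_n_of_notMem hn0 hln (hT ▸ h0)
            refine ⟨0, ℓ + 1, by omega, by omega, ?_, ?_⟩
            · rw [Tset_b_grow s v h1 h0, hT, hp, arc_grow hn0 hlt]
            · subst hp
              simp only [List.length_cons]; exact le_trans (Bnd_grow_step hn hl1) (by omega)
          · right
            refine ⟨p, ℓ, hl1, hln, ?_, by simp only [List.length_cons]; omega⟩
            rw [Tset_b_same s v (by tauto), hT]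

lemma cast_n_sub_one (hn : 2 ≤ n) : ((n - 1 : ℕ) : ZMod n) = -1 := by
  push_cast [Nat.cast_sub (by omega : 1 ≤ n)]
  simp [ZMod.natCast_self]

lemma Tset_replicate_a (s : ZMod n) (v : List CLetter) {p : ZMod n} {ℓ : ℕ}
    (h : Tset n s v = Arc n p ℓ) (m : ℕ) :
    Tset n s (List.replicate m CLetter.a ++ v) = Arc n (p - (m : ZMod n)) ℓ := by
  induction m with
  | zero => simpa using h
  | succ m ih =>
    have : List.replicate (m + 1) CLetter.a ++ v
        = CLetter.a :: (List.replicate m CLetter.a ++ v) := by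
      rw [List.replicate_succ]; rfl
    rw [this, Tset_a_arc s _ ih]
    have : p - ((m : ZMod n)) - 1 = p - (((m + 1 : ℕ)) : ZMod n) := by push_cast; ring
    rw [this]

lemma one_mem_arc_one (ℓ : ℕ) (hl : 1 ≤ ℓ) : (1 : ZMod n) ∈ Arc n 1 ℓ :=
  ⟨0, by omega, by simp⟩

lemma zero_notMem_arc_one (hn : 2 ≤ n) {ℓ : ℕ} (hl : ℓ ≤ n - 1) :
    (0 : ZMod n) ∉ Arc n 1 ℓ := by
  rintro ⟨k, hk, hx⟩
  have : ((k + 1 : ℕ) : ZMod n) = ((0 : ℕ) : ZMod n) := by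
    push_cast
    linear_combination -hx
  have := zmod_cast_inj (by omega) (by omega) (by omega) this
  omega

def syncW (n : ℕ) : ℕ → List CLetter
  | 0 => [CLetter.b]
  | k + 1 => CLetter.b :: (List.replicate (n - 1) CLetter.a ++ syncW n k)

lemma syncW_length (hn : 1 ≤ n) (k : ℕ) : (syncW n k).length = 1 + k * n := by
  induction k with
  | zero => simp [syncW]
  | succ k ih =>
    simp only [syncW, List.length_cons, List.length_append, List.length_replicate, ih]
    have : (k + 1) * n = k * n + n := by ring
    omega

lemma Tset_syncW (hn : 2 ≤ n) (k : ℕ) (hk : k ≤ n - 2) :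
    Tset n 1 (syncW n k) = Arc n 0 (k + 2) := by
  have hn0 : 0 < n := by omega
  induction k with
  | zero =>
    show Tset n 1 (CLetter.b :: []) = Arc n 0 2
    have h1 : (1 : ZMod n) ∈ Tset n 1 [] := by rw [Tset_nil]; rfl
    have h0 : (0 : ZMod n) ∉ Tset n 1 [] := by
      rw [Tset_nil]
      simp only [Set.mem_singleton_iff]
      intro h
      have : ((0 : ℕ) : ZMod n) = ((1 : ℕ) : ZMod n) := by push_cast; exact h
      have := zmod_cast_inj hn0 (by omega) (by omega) this
      omega
    rw [Tset_b_grow 1 [] h1 h0]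
    have harc : Tset n (1 : ZMod n) [] = Arc n 1 1 := by
      rw [Tset_nil]
      ext x
      simp only [Set.mem_singleton_iff, Arc, Set.mem_setOf_eq]
      constructor
      · rintro rfl; exact ⟨0, by omega, by simp⟩
      · rintro ⟨j, hj, hx⟩
        interval_cases j
        simpa using hx
    rw [harc, arc_grow hn0 (by omega : 1 < n)]
  | succ k ih =>
    have hT : Tset n 1 (syncW n k) = Arc n 0 (k + 2) := ih (by omega)
    show Tset n 1 (CLetter.b :: (List.replicate (n - 1) CLetter.a ++ syncW n k))
        = Arc n 0 (k + 3)
    have hrep : Tset n 1 (List.replicate (n - 1) CLetter.a ++ syncW n k)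
        = Arc n 1 (k + 2) := by
      rw [Tset_replicate_a 1 _ hT (n - 1), cast_n_sub_one hn]
      ring_nf
    have h1 : (1 : ZMod n) ∈ Tset n 1 (List.replicate (n - 1) CLetter.a ++ syncW n k) := by
      rw [hrep]; exact one_mem_arc_one _ (by omega)
    have h0 : (0 : ZMod n) ∉ Tset n 1 (List.replicate (n - 1) CLetter.a ++ syncW n k) := by
      rw [hrep]; exact zero_notMem_arc_one hn (by omega)
    rw [Tset_b_grow 1 _ h1 h0, hrep, arc_grow hn0 (by omega : k + 2 < n)]

/-- In the Černý automaton C_n (n ≥ 2) every synchronizing word has length at least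
`(n-1)²`, and a synchronizing word of length exactly `(n-1)²` exists; hence the
minimal synchronizing word has length exactly `(n-1)²`. -/
theorem cerny_minimal_sync_length (n : ℕ) (hn : 2 ≤ n) :
    (∀ w : List CLetter, (∃ s : ZMod n, ∀ q : ZMod n, actW (cernyδ n) q w = s) →
        (n - 1) ^ 2 ≤ w.length) ∧
      (∃ w : List CLetter, w.length = (n - 1) ^ 2 ∧
        ∃ s : ZMod n, ∀ q : ZMod n, actW (cernyδ n) q w = s) := by
  have hn0 : 0 < n := by omega
  haveI : NeZero n := ⟨by omega⟩
  constructor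
  · rintro w ⟨s, hs⟩
    have hU : Tset n s w = Set.univ := by
      ext q
      simp only [Tset, Set.mem_setOf_eq, Set.mem_univ, iff_true]
      exact hs q
    rcases invariant hn s w with hE | ⟨p, ℓ, hl1, hln, hT, hB⟩
    · exfalso
      rw [hE] at hU
      exact Set.empty_ne_univ hU
    · have hℓn : ℓ = n := by
        by_contra h
        exact arc_ne_univ hn0 (by omega) (hT.symm.trans hU)
      subst hℓn
      obtain ⟨m, rfl⟩ : ∃ m, ℓ = m + 2 := ⟨ℓ - 2, by omega⟩
      have hBval : (m + 1) + m * (m + 1) ≤ Bnd (m + 2) p (m + 2) := by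
        unfold Bnd
        have e1 : m + 2 - 1 = m + 1 := by omega
        have e2 : m + 2 - 2 = m := by omega
        simp only [(by omega : 2 ≤ m + 2), if_true, e1, e2]
        omega
      have hsq : (m + 2 - 1) ^ 2 = (m + 1) + m * (m + 1) := by
        have e1 : m + 2 - 1 = m + 1 := by omega
        rw [e1]; ring
      omega
  · refine ⟨syncW n (n - 2), ?_, 1, ?_⟩
    · rw [syncW_length (by omega) (n - 2)]
      obtain ⟨m, rfl⟩ : ∃ m, n = m + 2 := ⟨n - 2, by omega⟩
      have e1 : m + 2 - 1 = m + 1 := by omega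
      have e2 : m + 2 - 2 = m := by omega
      rw [e1, e2]
      have : (m + 1) ^ 2 = 1 + m * (m + 2) := by ring
      omega
    · intro q
      have h := Tset_syncW hn (n - 2) (le_refl _)
      have : n - 2 + 2 = n := by omega
      rw [this, arc_univ hn0] at h
      have : q ∈ Tset n 1 (syncW n (n - 2)) := by rw [h]; trivial
      exact this
end
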